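/- Let P be a profile over X of n ≥ 1 votes and x* ∈ X. If x* is undominated in P (for every z ≠ x*, at least one vote ranks x* above z), then for the Borda rule x* is a possible cowinner with respect to the addition of sufficiently many new candidates: there exists k₀ such that for all k ≥ k₀, inserting k new candidates immediately below x* in every vote yields a profile in which x* has maximal Borda score. -/

import Mathlib

/-! Inserting the `k` new candidates directly below `x*` gives `x*` at least `k` Borda points in
every vote, and a new candidate never beats `x*` in any vote. An old candidate `z ≠ x*` gets fewer
than `|X| + k` points from each vote, and fewer than `|X|` from a vote ranking `x*` above `z`,
where `z` ends up below all new candidates. Summing over the `n` votes,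
`borda z + k ≤ n (|X| + k) ≤ borda x* + k` once `k ≥ n |X|`. -/

namespace PcWNC

abbrev Profile := List (List ℕ)

/-- `v` is a linear-order vote over the candidate set `X`:
a duplicate-free list whose members are exactly the elements of `X`. -/
def IsVote (X : Finset ℕ) (v : List ℕ) : Prop := v.Nodup ∧ ∀ c, c ∈ v ↔ c ∈ X

/-- `P` is a profile over `X`: every vote is a linear order on `X`. -/
def IsProfile (X : Finset ℕ) (P : Profile) : Prop := ∀ v ∈ P, IsVote X v

/-- Restriction of a profile: delete from each vote the candidates outside `X`. -/
def restrict (X : Finset ℕ) (P : Profile) : Profile :=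
  P.map (fun v => v.filter (fun c => decide (c ∈ X)))

/-- `P'` extends `P` (w.r.t. the initial candidate set `X`). -/
def Extends (X : Finset ℕ) (P' P : Profile) : Prop := restrict X P' = P

/-- Plurality score: number of votes ranking `x` first. -/
def ntop (P : Profile) (x : ℕ) : ℕ := P.countP (fun v => decide (v.head? = some x))

/-- `K`-approval score: number of votes ranking `x` within the top `K` positions. -/
def approval (K : ℕ) (P : Profile) (x : ℕ) : ℕ :=
  P.countP (fun v => decide (x ∈ v.take K))

/-- Number of votes ranking `x` exactly in (1-indexed) position `i`. -/
def nPos (P : Profile) (i : ℕ) (x : ℕ) : ℕ :=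
  P.countP (fun v => decide (x ∈ v ∧ v.idxOf x + 1 = i))

/-- Borda score of `x`: total number of candidates ranked below `x` over all votes. -/
def borda (P : Profile) (x : ℕ) : ℕ :=
  (P.map (fun v => v.countP (fun w => decide (v.idxOf x < v.idxOf w)))).sum

/-- Number of votes ranking `x` above `z`. -/
def nAbove (P : Profile) (x z : ℕ) : ℕ :=
  P.countP (fun v => decide (x ∈ v ∧ z ∈ v ∧ v.idxOf x < v.idxOf z))

/-- Score of `x` under the positional scoring vector `s` (position `i` counted from 0). -/
def score (s : ℕ → ℤ) (P : Profile) (x : ℕ) : ℤ :=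
  (P.map (fun v => s (v.idxOf x))).sum

/-- Insert the candidates of `ys` immediately below `x` in the vote `v`. -/
def insertBelow (x : ℕ) (ys : List ℕ) (v : List ℕ) : List ℕ :=
  v.takeWhile (fun c => decide (c ≠ x)) ++ x :: ys ++
    (v.dropWhile (fun c => decide (c ≠ x))).drop 1

/-- Insert the candidates of `ys` immediately below `x` in every vote of `P`. -/
def insertProfile (x : ℕ) (ys : List ℕ) (P : Profile) : Profile :=
  P.map (insertBelow x ys)

/-- Veto score: number of votes not ranking `x` last. -/
def vetoScore (P : Profile) (x : ℕ) : ℕ :=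
  P.countP (fun v => decide (v.getLast? ≠ some x))

lemma _root_.List.sum_map_add_le_length_nsmul {ι M : Type*} [AddCommMonoid M] [PartialOrder M]
    [IsOrderedAddMonoid M] {l : List ι} {g : ι → M} {C k : M} (hg : ∀ i ∈ l, g i ≤ C) {i₀ : ι}
    (hi₀ : i₀ ∈ l) (hk : g i₀ + k ≤ C) : (l.map g).sum + k ≤ l.length • C := by
  induction l with
  | nil => simp at hi₀
  | cons i l ih =>
    have hgl : ∀ j ∈ l, g j ≤ C := fun j hj => hg j (List.mem_cons_of_mem _ hj)
    rw [List.map_cons, List.sum_cons, List.length_cons, succ_nsmul', add_assoc]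
    rcases List.mem_cons.1 hi₀ with rfl | hi₀
    · rw [add_comm _ k, ← add_assoc]
      exact add_le_add hk (by simpa using List.sum_le_card_nsmul _ _ (List.forall_mem_map.2 hgl))
    · exact add_le_add (hg i List.mem_cons_self) (ih hgl hi₀)

def voteScore (v : List ℕ) (z : ℕ) : ℕ := v.countP (fun w => decide (v.idxOf z < v.idxOf w))

lemma borda_insertProfile (x : ℕ) (ys : List ℕ) (P : Profile) (z : ℕ) :
    borda (insertProfile x ys P) z = (P.map fun v => voteScore (insertBelow x ys v) z).sum := by
  simp only [borda, insertProfile, List.map_map]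
  rfl

lemma voteScore_lt_length {v : List ℕ} {z : ℕ} (hz : z ∈ v) : voteScore v z < v.length :=
  List.countP_lt_length_iff.2 ⟨z, hz, by simp⟩

lemma voteScore_append_cons {l₁ l₂ : List ℕ} {a : ℕ} (h : (l₁ ++ a :: l₂).Nodup) :
    voteScore (l₁ ++ a :: l₂) a = l₂.length := by
  have ha : a ∉ l₁ := fun ha => List.disjoint_of_nodup_append h ha List.mem_cons_self
  have hidx : (l₁ ++ a :: l₂).idxOf a = l₁.length := by
    rw [List.idxOf_append_of_notMem ha, List.idxOf_cons_self, add_zero]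
  have below : ∀ w ∈ l₂, l₁.length < (l₁ ++ a :: l₂).idxOf w := fun w hw => by
    have hw₁ : w ∉ l₁ := fun hw₁ => List.disjoint_of_nodup_append h hw₁ (List.mem_cons_of_mem _ hw)
    have hwa : a ≠ w := fun hwa => (List.nodup_cons.1 (List.nodup_append.1 h).2.1).1 (hwa ▸ hw)
    rw [List.idxOf_append_of_notMem hw₁, List.idxOf_cons_ne _ hwa]
    omega
  have above : ∀ w ∈ l₁, (l₁ ++ a :: l₂).idxOf w < l₁.length := fun w hw => by
    rw [List.idxOf_append_of_mem hw]
    exact List.idxOf_lt_length_iff.2 hw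
  unfold voteScore
  rw [List.countP_append, List.countP_cons, hidx, List.countP_eq_zero.2, List.countP_eq_length.2]
  · simp
  · simpa using below
  · simpa using fun w hw => (above w hw).le

lemma insertBelow_append_cons {x : ℕ} {l₁ : List ℕ} (hx : x ∉ l₁) (ys l₂ : List ℕ) :
    insertBelow x ys (l₁ ++ x :: l₂) = l₁ ++ x :: (ys ++ l₂) := by
  have hpos : ∀ c ∈ l₁, decide (c ≠ x) = true := fun c hc => by
    simpa using fun h : c = x => hx (h ▸ hc)
  unfold insertBelow
  rw [List.takeWhile_append_of_pos hpos, List.dropWhile_append_of_pos hpos]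
  simp

lemma IsVote.length_eq {X : Finset ℕ} {v : List ℕ} (hv : IsVote X v) : v.length = X.card := by
  rw [← List.toFinset_card_of_nodup hv.1]
  congr
  ext c
  simpa using hv.2 c

section InsertedVote

variable {X : Finset ℕ} {v ys : List ℕ} {x : ℕ}

lemma IsVote.exists_insertBelow_eq (hv : IsVote X v) (hx : x ∈ X) (hys : ys.Nodup)
    (hysX : ∀ y ∈ ys, y ∉ X) :
    ∃ l₁ l₂, v = l₁ ++ x :: l₂ ∧ insertBelow x ys v = l₁ ++ x :: (ys ++ l₂) ∧
      (l₁ ++ x :: (ys ++ l₂)).Nodup := by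
  obtain ⟨l₁, l₂, rfl⟩ := List.append_of_mem ((hv.2 x).2 hx)
  have hx₁ : x ∉ l₁ := fun h => List.disjoint_of_nodup_append hv.1 h List.mem_cons_self
  refine ⟨l₁, l₂, rfl, insertBelow_append_cons hx₁ ys l₂, ?_⟩
  have hperm : (l₁ ++ x :: (ys ++ l₂)).Perm (ys ++ (l₁ ++ x :: l₂)) := by
    simp only [List.perm_iff_count, List.count_append, List.count_cons]
    intro a
    omega
  rw [hperm.nodup_iff, List.nodup_append]
  exact ⟨hys, hv.1, fun y hy w hw hyw => hysX y hy (hyw ▸ (hv.2 w).1 hw)⟩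

lemma IsVote.length_le_voteScore_insertBelow (hv : IsVote X v) (hx : x ∈ X) (hys : ys.Nodup)
    (hysX : ∀ y ∈ ys, y ∉ X) : ys.length ≤ voteScore (insertBelow x ys v) x := by
  obtain ⟨l₁, l₂, -, hins, hnd⟩ := hv.exists_insertBelow_eq hx hys hysX
  rw [hins, voteScore_append_cons hnd, List.length_append]
  omega

lemma IsVote.voteScore_insertBelow_le (hv : IsVote X v) (hx : x ∈ X) (hys : ys.Nodup)
    (hysX : ∀ y ∈ ys, y ∉ X) {y : ℕ} (hy : y ∈ ys) :
    voteScore (insertBelow x ys v) y ≤ voteScore (insertBelow x ys v) x := by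
  obtain ⟨l₁, l₂, -, hins, hnd⟩ := hv.exists_insertBelow_eq hx hys hysX
  obtain ⟨s, t, rfl⟩ := List.append_of_mem hy
  have e : l₁ ++ x :: (s ++ y :: t ++ l₂) = (l₁ ++ x :: s) ++ y :: (t ++ l₂) := by simp
  rw [hins, voteScore_append_cons hnd, e, voteScore_append_cons (e ▸ hnd)]
  simp only [List.length_append, List.length_cons]
  omega

lemma IsVote.voteScore_insertBelow_lt_card (hv : IsVote X v) (hx : x ∈ X) (hys : ys.Nodup)
    (hysX : ∀ y ∈ ys, y ∉ X) {z : ℕ} (hz : z ∈ X) (hxz : v.idxOf x < v.idxOf z) :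
    voteScore (insertBelow x ys v) z < X.card := by
  obtain ⟨l₁, l₂, rfl, hins, hnd⟩ := hv.exists_insertBelow_eq hx hys hysX
  have hx₁ : x ∉ l₁ := fun h => List.disjoint_of_nodup_append hnd h List.mem_cons_self
  have hz₂ : z ∈ l₂ := by
    have hzv := (hv.2 z).2 hz
    rw [List.mem_append, List.mem_cons] at hzv
    rcases hzv with hz₁ | rfl | hz₂
    · rw [List.idxOf_append_of_mem hz₁, List.idxOf_append_of_notMem hx₁] at hxz
      exact absurd (List.idxOf_lt_length_iff.2 hz₁) (by omega)
    · exact absurd hxz (lt_irrefl _)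
    · exact hz₂
  obtain ⟨s, t, rfl⟩ := List.append_of_mem hz₂
  have e : l₁ ++ x :: (ys ++ (s ++ z :: t)) = (l₁ ++ x :: (ys ++ s)) ++ z :: t := by simp
  rw [hins, e, voteScore_append_cons (e ▸ hnd), ← hv.length_eq]
  simp only [List.length_append, List.length_cons]
  omega

lemma IsVote.voteScore_insertBelow_lt (hv : IsVote X v) (hx : x ∈ X) (hys : ys.Nodup)
    (hysX : ∀ y ∈ ys, y ∉ X) {w : ℕ} (hw : w ∈ X ∨ w ∈ ys) :
    voteScore (insertBelow x ys v) w < X.card + ys.length := by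
  obtain ⟨l₁, l₂, rfl, hins, -⟩ := hv.exists_insertBelow_eq hx hys hysX
  have hlen := hv.length_eq
  have hmem : w ∈ l₁ ++ x :: l₂ ∨ w ∈ ys := hw.imp_left (hv.2 w).2
  rw [hins]
  refine (voteScore_lt_length ?_).trans_eq ?_
  · simp only [List.mem_append, List.mem_cons] at hmem ⊢
    tauto
  · simp only [List.length_append, List.length_cons] at hlen ⊢
    omega

end InsertedVote

theorem stmt_10_general (X : Finset ℕ) (P : Profile) (hP : IsProfile X P)
    (xstar : ℕ) (hx : xstar ∈ X)
    (hund : ∀ z ∈ X, z ≠ xstar → ∃ v ∈ P, v.idxOf xstar < v.idxOf z) :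
    ∃ k₀, ∀ k, k₀ ≤ k → ∀ ys : List ℕ, ys.Nodup → ys.length = k →
      (∀ y ∈ ys, y ∉ X) →
      ∀ z, (z ∈ X ∨ z ∈ ys) →
        borda (insertProfile xstar ys P) z ≤ borda (insertProfile xstar ys P) xstar := by
  refine ⟨P.length * X.card, fun k hk ys hys hlen hysX z hz => ?_⟩
  subst hlen
  rw [borda_insertProfile, borda_insertProfile]
  by_cases hzx : z = xstar
  · rw [hzx]
  rcases hz with hzX | hzy
  · obtain ⟨v₀, hv₀, hlt⟩ := hund z hzX hzx
    have upper := List.sum_map_add_le_length_nsmul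
      (fun v hv => ((hP v hv).voteScore_insertBelow_lt hx hys hysX (Or.inl hzX)).le) hv₀
      (Nat.add_le_add_right ((hP v₀ hv₀).voteScore_insertBelow_lt_card hx hys hysX hzX hlt).le _)
    have lower := List.card_nsmul_le_sum _ ys.length <| List.forall_mem_map.2 fun v hv =>
      (hP v hv).length_le_voteScore_insertBelow hx hys hysX
    rw [List.length_map, smul_eq_mul] at lower
    rw [smul_eq_mul, Nat.mul_add] at upper
    omega
  · exact List.sum_le_sum fun v hv => (hP v hv).voteScore_insertBelow_le hx hys hysX hzy

/-- If `xstar` is undominated, then for all sufficiently large `k`, inserting `k` new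
candidates immediately below `xstar` in every vote makes `xstar` a Borda cowinner. -/
theorem stmt_10 (X : Finset ℕ) (P : Profile) (hP : IsProfile X P) (hne : P ≠ [])
    (xstar : ℕ) (hx : xstar ∈ X)
    (hund : ∀ z ∈ X, z ≠ xstar → ∃ v ∈ P, v.idxOf xstar < v.idxOf z) :
    ∃ k₀, ∀ k, k₀ ≤ k → ∀ ys : List ℕ, ys.Nodup → ys.length = k →
      (∀ y ∈ ys, y ∉ X) →
      ∀ z, (z ∈ X ∨ z ∈ ys) →
        borda (insertProfile xstar ys P) z ≤ borda (insertProfile xstar ys P) xstar :=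
  stmt_10_general X P hP xstar hx hund

end PcWNC
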